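/- Let H₀ be a bounded self-adjoint operator on a Hilbert space and (u_n) unitary operators satisfying the cycle condition ∏_{n=0}^{L−1} u_{k+L−n} = 𝟙 for all k ≥ 0 and some L ≥ 1. With U_N(t) = ∏_{n=0}^{N−1} u_{N−n} e^{−iH₀t/N} and ρ_N(t) = U_N(t) ρ U_N(t)†, for any bounded ρ one has ‖ρ_N(t) − ρ_{N+L}(t)‖ ≤ ‖ρ‖(e^{2L‖H₀‖|t|/N} − 1) + L‖ρ‖(e^{2‖H₀‖|t|/N} − 1). In particular ρ_N(t) is Cauchy along arithmetic progressions of step L as N → ∞. -/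

import Mathlib

/-!
Write `U_N` for the pulse evolution with `N` pulses. The evolution with `N + L` pulses
factors as `P * Q`, where `Q` is `U_N` with each free step `t / N` shortened to
`t / (N + L)`, and `P` is one full cycle of pulses interleaved with short free steps.
Telescoping over the factors, and using that all factors are unitary, `Q` differs from
`U_N` by at most `N (exp (‖H₀‖ |t / (N + L) - t / N|) - 1)`, while `P` differs from the
cycle product `1` by at most `L (exp (‖H₀‖ |t / (N + L)|) - 1)`. Conjugation by unitaries
is `2 ‖ρ‖`-Lipschitz, and the elementary bound `n (exp x - 1) ≤ exp (n x) - 1` turns these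
into the stated exponentials.
-/

noncomputable def pulseEvolution
    {H : Type*} [NormedAddCommGroup H] [InnerProductSpace ℂ H] [CompleteSpace H]
    (u : ℕ → H →L[ℂ] H) (H₀ : H →L[ℂ] H) (N : ℕ) (t : ℝ) : H →L[ℂ] H :=
  ((List.range N).map (fun n =>
    u (N - n) * NormedSpace.exp ((-(Complex.I) * ((t / N : ℝ) : ℂ)) • H₀))).prod

open NormedSpace
open scoped Nat

theorem natCast_mul_exp_sub_one_le (n : ℕ) (x : ℝ) :
    n * (Real.exp x - 1) ≤ Real.exp (n * x) - 1 := by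
  have hbernoulli := one_add_mul_le_pow (a := Real.exp x - 1)
    (by linarith [Real.exp_pos x]) n
  rw [add_sub_cancel, ← Real.exp_nat_mul] at hbernoulli
  linarith

theorem norm_exp_sub_one_le {𝔸 : Type*} [NormedRing 𝔸] [NormedAlgebra ℂ 𝔸]
    [CompleteSpace 𝔸] (x : 𝔸) : ‖exp x - 1‖ ≤ Real.exp ‖x‖ - 1 := by
  have hsum : Summable fun n : ℕ => (n ! : ℂ)⁻¹ • x ^ n := by
    simpa using expSeries_summable' (𝕂 := ℂ) x
  have hsumR : Summable fun n : ℕ => ‖x‖ ^ n / n ! := Real.summable_pow_div_factorial ‖x‖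
  have hexp : exp x - 1 = ∑' n : ℕ, ((n + 1)! : ℂ)⁻¹ • x ^ (n + 1) := by
    rw [exp_eq_tsum ℂ]
    beta_reduce
    rw [hsum.tsum_eq_zero_add]
    simp
  have hexpR : Real.exp ‖x‖ - 1 = ∑' n : ℕ, ‖x‖ ^ (n + 1) / (n + 1)! := by
    rw [Real.exp_eq_exp_ℝ, exp_eq_tsum_div]
    beta_reduce
    rw [hsumR.tsum_eq_zero_add]
    simp
  rw [hexp, hexpR]
  refine tsum_of_norm_bounded (hsumR.comp_injective (add_left_injective 1)).hasSum fun n => ?_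
  rw [Function.comp_apply, norm_smul, norm_inv, Complex.norm_natCast, div_eq_inv_mul]
  exact mul_le_mul_of_nonneg_left (norm_pow_le' x n.succ_pos) (by positivity)

section Unitary

variable {A : Type*} [NormedRing A] [StarRing A] [CStarRing A]

theorem norm_list_prod_sub_list_prod_le {ι : Type*} (l : List ι) {f g : ι → A}
    (hf : ∀ i ∈ l, f i ∈ unitary A) (hg : ∀ i ∈ l, g i ∈ unitary A) :
    ‖(l.map f).prod - (l.map g).prod‖ ≤ (l.map fun i => ‖f i - g i‖).sum := by
  induction l with
  | nil => simp
  | cons i l ih =>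
    simp only [List.forall_mem_cons] at hf hg
    have hprod : (l.map f).prod ∈ unitary A := by
      refine Submonoid.list_prod_mem _ fun x hx => ?_
      obtain ⟨j, hj, rfl⟩ := List.mem_map.mp hx
      exact hf.2 j hj
    have htelescope : f i * (l.map f).prod - g i * (l.map g).prod
        = (f i - g i) * (l.map f).prod + g i * ((l.map f).prod - (l.map g).prod) := by
      noncomm_ring
    simp only [List.map_cons, List.prod_cons, List.sum_cons, htelescope]
    calc _ ≤ ‖(f i - g i) * (l.map f).prod‖ + ‖g i * ((l.map f).prod - (l.map g).prod)‖ :=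
          norm_add_le _ _
      _ ≤ _ := by
        rw [CStarRing.norm_mul_mem_unitary _ hprod, CStarRing.norm_mem_unitary_mul _ hg.1]
        exact add_le_add_right (ih hf.2 hg.2) _

theorem norm_conj_sub_conj_le {U V : A} (hU : U ∈ unitary A) (hV : V ∈ unitary A) (ρ : A) :
    ‖U * ρ * star U - V * ρ * star V‖ ≤ 2 * ‖ρ‖ * ‖U - V‖ := by
  have hsplit : U * ρ * star U - V * ρ * star V
      = (U - V) * ρ * star U + V * (ρ * star (U - V)) := by
    rw [star_sub]; noncomm_ring
  rw [hsplit]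
  calc _ ≤ ‖(U - V) * ρ * star U‖ + ‖V * (ρ * star (U - V))‖ := norm_add_le _ _
    _ = ‖(U - V) * ρ‖ + ‖ρ * star (U - V)‖ := by
      rw [CStarRing.norm_mul_mem_unitary _ (Unitary.star_mem hU),
        CStarRing.norm_mem_unitary_mul _ hV]
    _ ≤ ‖U - V‖ * ‖ρ‖ + ‖ρ‖ * ‖U - V‖ := by
      gcongr <;> [exact norm_mul_le _ _; exact (norm_mul_le _ _).trans_eq (by rw [norm_star])]
    _ = 2 * ‖ρ‖ * ‖U - V‖ := by ring

end Unitary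

section PulseSequence

variable {A : Type*} [CStarAlgebra A]

noncomputable def freeEvolution (a : A) (s : ℝ) : A :=
  exp ((-(Complex.I) * (s : ℂ)) • a)

theorem freeEvolution_mem_unitary {a : A} (ha : IsSelfAdjoint a) (s : ℝ) :
    freeEvolution a s ∈ unitary A := by
  let _ : NormedAlgebra ℚ A := .restrictScalars ℚ ℂ A
  refine exp_mem_unitary_of_mem_skewAdjoint (ha.smul_mem_skewAdjoint ?_)
  simp [skewAdjoint.mem_iff]

theorem freeEvolution_zero (a : A) : freeEvolution a 0 = 1 := by
  simp [freeEvolution]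

theorem freeEvolution_add (a : A) (s r : ℝ) :
    freeEvolution a (s + r) = freeEvolution a s * freeEvolution a r := by
  let _ : NormedAlgebra ℚ A := .restrictScalars ℚ ℂ A
  rw [freeEvolution, freeEvolution, freeEvolution,
    ← exp_add_of_commute (((Commute.refl a).smul_left _).smul_right _), ← add_smul]
  push_cast
  ring_nf

theorem norm_freeEvolution_sub_le {a : A} (ha : IsSelfAdjoint a) (s r : ℝ) :
    ‖freeEvolution a s - freeEvolution a r‖ ≤ Real.exp (‖a‖ * |s - r|) - 1 := by
  have hfactor : freeEvolution a s = freeEvolution a r * freeEvolution a (s - r) := by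
    rw [← freeEvolution_add, add_sub_cancel]
  calc ‖freeEvolution a s - freeEvolution a r‖
      = ‖freeEvolution a r * (freeEvolution a (s - r) - 1)‖ := by
        rw [mul_sub, mul_one, ← hfactor]
    _ = ‖exp ((-(Complex.I) * ((s - r : ℝ) : ℂ)) • a) - 1‖ :=
        CStarRing.norm_mem_unitary_mul _ (freeEvolution_mem_unitary ha r)
    _ ≤ Real.exp (‖a‖ * |s - r|) - 1 := by
        refine (norm_exp_sub_one_le _).trans_eq ?_
        rw [norm_smul, norm_mul, norm_neg, Complex.norm_I, one_mul, Complex.norm_real,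
          Real.norm_eq_abs, mul_comm]

/-- The pulses `u (k + m), …, u (k + 1)`, latest on the left, each applied after a free
evolution over time `s`. -/
noncomputable def pulseBlock (u : ℕ → A) (a : A) (k m : ℕ) (s : ℝ) : A :=
  ((List.range m).map fun n => u (k + m - n) * freeEvolution a s).prod

variable {u : ℕ → A} {a : A}

theorem pulseBlock_mem_unitary (hu : ∀ n, u n ∈ unitary A) (ha : IsSelfAdjoint a)
    (k m : ℕ) (s : ℝ) : pulseBlock u a k m s ∈ unitary A := by
  refine Submonoid.list_prod_mem _ fun x hx => ?_
  obtain ⟨n, -, rfl⟩ := List.mem_map.mp hx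
  exact mul_mem (hu _) (freeEvolution_mem_unitary ha s)

theorem pulseBlock_add (k n m : ℕ) (s : ℝ) :
    pulseBlock u a k (n + m) s = pulseBlock u a (k + n) m s * pulseBlock u a k n s := by
  rw [pulseBlock, add_comm n m, List.range_add, List.map_append, List.prod_append,
    List.map_map]
  congr 2 <;> refine List.map_congr_left fun i _ => ?_
  · rw [add_assoc, add_comm m n]
  · simp only [Function.comp_apply]
    congr 2
    omega

theorem pulseBlock_zero_step (k m : ℕ) :
    pulseBlock u a k m 0 = ((List.range m).map fun n => u (k + m - n)).prod := by
  simp [pulseBlock, freeEvolution_zero]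

theorem norm_pulseBlock_sub_pulseBlock_le (hu : ∀ n, u n ∈ unitary A) (ha : IsSelfAdjoint a)
    (k m : ℕ) (s r : ℝ) :
    ‖pulseBlock u a k m s - pulseBlock u a k m r‖
      ≤ m * (Real.exp (‖a‖ * |s - r|) - 1) := by
  have hunitary : ∀ (s : ℝ) (n : ℕ), u (k + m - n) * freeEvolution a s ∈ unitary A :=
    fun s n => mul_mem (hu _) (freeEvolution_mem_unitary ha s)
  refine (norm_list_prod_sub_list_prod_le _ (fun n _ => hunitary s n)
    (fun n _ => hunitary r n)).trans ?_
  refine (List.sum_le_card_nsmul _ (Real.exp (‖a‖ * |s - r|) - 1) fun x hx => ?_).trans_eq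
    (by simp)
  obtain ⟨n, -, rfl⟩ := List.mem_map.mp hx
  rw [← mul_sub, CStarRing.norm_mem_unitary_mul _ (hu _)]
  exact norm_freeEvolution_sub_le ha s r

theorem norm_pulseBlock_sub_pulseBlock_add_le (hu : ∀ n, u n ∈ unitary A)
    (ha : IsSelfAdjoint a) {N L : ℕ}
    (hcycle : ((List.range L).map fun n => u (N + L - n)).prod = 1) (s r : ℝ) :
    ‖pulseBlock u a 0 N s - pulseBlock u a 0 (N + L) r‖
      ≤ L * (Real.exp (‖a‖ * |r|) - 1) + N * (Real.exp (‖a‖ * |r - s|) - 1) := by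
  rw [pulseBlock_add, zero_add]
  set P := pulseBlock u a N L r
  set Q := pulseBlock u a 0 N r
  have hP : ‖P - 1‖ ≤ L * (Real.exp (‖a‖ * |r|) - 1) := by
    simpa [P, pulseBlock_zero_step, hcycle] using norm_pulseBlock_sub_pulseBlock_le hu ha N L r 0
  have hQ := norm_pulseBlock_sub_pulseBlock_le hu ha 0 N r s
  calc ‖pulseBlock u a 0 N s - P * Q‖ = ‖(P - 1) * Q + (Q - pulseBlock u a 0 N s)‖ := by
        rw [norm_sub_rev]; congr 1; noncomm_ring
    _ ≤ ‖P - 1‖ + ‖Q - pulseBlock u a 0 N s‖ := by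
        rw [← CStarRing.norm_mul_mem_unitary (P - 1) (pulseBlock_mem_unitary hu ha 0 N r)]
        exact norm_add_le _ _
    _ ≤ _ := add_le_add hP hQ

end PulseSequence

theorem two_mul_pulse_error_le {c : ℝ} (hc : 0 ≤ c) (t : ℝ) {N : ℕ} (hN : 1 ≤ N)
    (L : ℕ) :
    2 * (L * (Real.exp (c * |t / (N + L : ℕ)|) - 1)
        + N * (Real.exp (c * |t / (N + L : ℕ) - t / N|) - 1))
      ≤ (Real.exp (2 * L * c * |t| / N) - 1) + L * (Real.exp (2 * c * |t| / N) - 1) := by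
  have hN₀ : (0 : ℝ) < N := by exact_mod_cast hN
  have hNL : (N : ℝ) ≤ ((N + L : ℕ) : ℝ) := by exact_mod_cast N.le_add_right L
  have hshort : 2 * (c * |t / (N + L : ℕ)|) ≤ 2 * c * |t| / N := by
    rw [abs_div, Nat.abs_cast, mul_div_assoc, ← mul_assoc]
    gcongr
  have hshift : t / (N + L : ℕ) - t / N = -(L * t / (N * (N + L : ℕ))) := by
    field_simp
    push_cast
    ring
  have hdrift :
      ((2 * N : ℕ) : ℝ) * (c * |t / (N + L : ℕ) - t / N|) ≤ 2 * L * c * |t| / N := by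
    rw [hshift, abs_neg, abs_div, abs_mul, abs_mul, Nat.abs_cast, Nat.abs_cast, Nat.abs_cast]
    calc _ = 2 * L * c * |t| / (N + L : ℕ) := by push_cast; field_simp
      _ ≤ 2 * L * c * |t| / N := by gcongr
  have hcycle_part : L * (2 * (Real.exp (c * |t / (N + L : ℕ)|) - 1))
      ≤ L * (Real.exp (2 * c * |t| / N) - 1) := by
    gcongr
    exact_mod_cast (natCast_mul_exp_sub_one_le 2 _).trans (by gcongr; exact_mod_cast hshort)
  have hdrift_part : ((2 * N : ℕ) : ℝ) * (Real.exp (c * |t / (N + L : ℕ) - t / N|) - 1)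
      ≤ Real.exp (2 * L * c * |t| / N) - 1 :=
    (natCast_mul_exp_sub_one_le _ _).trans (by gcongr)
  rw [Nat.cast_mul, Nat.cast_ofNat] at hdrift_part
  linarith

theorem pulseEvolution_eq_pulseBlock {H : Type*} [NormedAddCommGroup H] [InnerProductSpace ℂ H]
    [CompleteSpace H] (u : ℕ → H →L[ℂ] H) (H₀ : H →L[ℂ] H) (N : ℕ) (t : ℝ) :
    pulseEvolution u H₀ N t = pulseBlock u H₀ 0 N (t / N) := by
  simp only [pulseEvolution, pulseBlock, freeEvolution, zero_add]

theorem decoupling_cycle_inequality_general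
    {H : Type*} [NormedAddCommGroup H] [InnerProductSpace ℂ H] [CompleteSpace H]
    (u : ℕ → H →L[ℂ] H) (hu : ∀ n, u n ∈ unitary (H →L[ℂ] H))
    (L : ℕ)
    (hcycle : ∀ k : ℕ, ((List.range L).map (fun n => u (k + L - n))).prod = 1)
    (H₀ : H →L[ℂ] H) (hH₀ : IsSelfAdjoint H₀)
    (ρ : H →L[ℂ] H) (t : ℝ) (N : ℕ) (hN : 1 ≤ N) :
    ‖pulseEvolution u H₀ N t * ρ * star (pulseEvolution u H₀ N t)
      - pulseEvolution u H₀ (N + L) t * ρ * star (pulseEvolution u H₀ (N + L) t)‖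
    ≤ ‖ρ‖ * (Real.exp (2 * L * ‖H₀‖ * |t| / N) - 1)
      + L * ‖ρ‖ * (Real.exp (2 * ‖H₀‖ * |t| / N) - 1) := by
  simp only [pulseEvolution_eq_pulseBlock]
  have hunitary (m : ℕ) (s : ℝ) := pulseBlock_mem_unitary hu hH₀ 0 m s
  calc _ ≤ 2 * ‖ρ‖
        * ‖pulseBlock u H₀ 0 N (t / N) - pulseBlock u H₀ 0 (N + L) (t / (N + L : ℕ))‖ :=
        norm_conj_sub_conj_le (hunitary _ _) (hunitary _ _) ρ
    _ ≤ ‖ρ‖ * (2 * (L * (Real.exp (‖H₀‖ * |t / (N + L : ℕ)|) - 1)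
          + N * (Real.exp (‖H₀‖ * |t / (N + L : ℕ) - t / N|) - 1))) := by
        rw [mul_comm 2, mul_assoc]
        gcongr
        exact norm_pulseBlock_sub_pulseBlock_add_le hu hH₀ (hcycle N) _ _
    _ ≤ ‖ρ‖ * ((Real.exp (2 * L * ‖H₀‖ * |t| / N) - 1)
          + L * (Real.exp (2 * ‖H₀‖ * |t| / N) - 1)) := by
        gcongr
        exact two_mul_pulse_error_le (norm_nonneg H₀) t hN L
    _ = _ := by ring

/-- Cycle comparison inequality for decoupling sequences whose pulses multiply to the
identity over each cycle of length `L` (Corollary of Appendix B). -/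
theorem decoupling_cycle_inequality
    {H : Type*} [NormedAddCommGroup H] [InnerProductSpace ℂ H] [CompleteSpace H]
    (u : ℕ → H →L[ℂ] H) (hu : ∀ n, u n ∈ unitary (H →L[ℂ] H))
    (L : ℕ) (hL : 1 ≤ L)
    (hcycle : ∀ k : ℕ, ((List.range L).map (fun n => u (k + L - n))).prod = 1)
    (H₀ : H →L[ℂ] H) (hH₀ : IsSelfAdjoint H₀)
    (ρ : H →L[ℂ] H) (t : ℝ) (N : ℕ) (hN : 1 ≤ N) :
    ‖pulseEvolution u H₀ N t * ρ * star (pulseEvolution u H₀ N t)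
      - pulseEvolution u H₀ (N + L) t * ρ * star (pulseEvolution u H₀ (N + L) t)‖
    ≤ ‖ρ‖ * (Real.exp (2 * L * ‖H₀‖ * |t| / N) - 1)
      + L * ‖ρ‖ * (Real.exp (2 * ‖H₀‖ * |t| / N) - 1) :=
  decoupling_cycle_inequality_general u hu L hcycle H₀ hH₀ ρ t N hN
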